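/- arXiv:2103.15006 — 5 statements merged into one kernel-verified Lean document; each statement's English description precedes it below -/
import Mathlib

section
/- If (L, [·,…,·]) is an n-Lie algebra, then the fundamental bracket [X,Y]_F = Σ_{i=1}^{n-1} y_1∧⋯∧[x_1,…,x_{n-1},y_i]∧⋯∧y_{n-1} on the space of fundamental elements ∧^{n-1}L satisfies the (left) Leibniz identity: [X,[Y,Z]_F]_F = [[X,Y]_F,Z]_F + [Y,[X,Z]_F]_F. -/
open Function BigOperators

/-- K-multilinearity of a map on tuples. -/
def IsMultilin (R : Type*) [CommRing R] {L N : Type*} [AddCommGroup L] [Module R L]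
    [AddCommGroup N] [Module R N] {m : ℕ} (f : (Fin m → L) → N) : Prop :=
  (∀ (x : Fin m → L) (i : Fin m) (u v : L),
    f (Function.update x i (u + v)) = f (Function.update x i u) + f (Function.update x i v)) ∧
  (∀ (x : Fin m → L) (i : Fin m) (c : R) (u : L),
    f (Function.update x i (c • u)) = c • f (Function.update x i u))

/-- Alternating: vanishes on tuples with a repeated entry. -/
def IsAlt {L N : Type*} [AddCommGroup N] {m : ℕ} (f : (Fin m → L) → N) : Prop :=
  ∀ (x : Fin m → L) (i j : Fin m), i ≠ j → x i = x j → f x = 0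

/-- Filippov (fundamental) identity for an (n+2)-ary bracket. -/
def Filippov {L : Type*} [AddCommGroup L] {n : ℕ} (b : (Fin (n+2) → L) → L) : Prop :=
  ∀ (x : Fin (n+1) → L) (y : Fin (n+2) → L),
    b (Fin.snoc x (b y)) = ∑ i : Fin (n+2), b (Function.update y i (b (Fin.snoc x (y i))))

/-- Kasymov representation of an (n+2)-Lie algebra on `M`. -/
def IsRep (R : Type*) [CommRing R] {L M : Type*} [AddCommGroup L] [Module R L]
    [AddCommGroup M] [Module R M] {n : ℕ}
    (b : (Fin (n+2) → L) → L) (ρ : (Fin (n+1) → L) → M → M) : Prop :=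
  (∀ (x : Fin (n+1) → L) (m m' : M), ρ x (m + m') = ρ x m + ρ x m') ∧
  (∀ (x : Fin (n+1) → L) (c : R) (m : M), ρ x (c • m) = c • ρ x m) ∧
  IsMultilin R ρ ∧ IsAlt ρ ∧
  (∀ (x y : Fin (n+1) → L) (m : M),
    ρ x (ρ y m) - ρ y (ρ x m) = ∑ i : Fin (n+1), ρ (Function.update y i (b (Fin.snoc x (y i)))) m) ∧
  (∀ (x : Fin n → L) (y : Fin (n+2) → L) (m : M),
    ρ (Fin.snoc x (b y)) m
      = ∑ i : Fin (n+2), ((-1 : R) ^ (n + 1 + (i : ℕ))) •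
          ρ (i.removeNth y) (ρ (Fin.snoc x (y i)) m))

/-- (n+2)-Lie Rinehart algebra structure. -/
def IsNLieRinehart (R A : Type*) [CommRing R] [CommRing A] [Algebra R A]
    {L : Type*} [AddCommGroup L] [Module R L] [Module A L] [IsScalarTower R A L] {n : ℕ}
    (b : (Fin (n+2) → L) → L) (ρ : (Fin (n+1) → L) → A → A) : Prop :=
  IsMultilin R b ∧ IsAlt b ∧ Filippov b ∧
  (∀ (x : Fin (n+1) → L) (a a' : A), ρ x (a * a') = a * ρ x a' + a' * ρ x a) ∧
  IsRep R b ρ ∧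
  (∀ (x : Fin (n+1) → L) (i : Fin (n+1)) (a : A),
    ρ (Function.update x i (a • x i)) = a • ρ x) ∧
  (∀ (x : Fin (n+2) → L) (a : A),
    b (Function.update x (Fin.last (n+1)) (a • x (Fin.last (n+1))))
      = a • b x + ρ (Fin.init x) a • x (Fin.last (n+1)))

/-- Representation of an (n+2)-Lie Rinehart algebra on an `A`-module `M`. -/
def IsRinehartRep (R A : Type*) [CommRing R] [CommRing A] [Algebra R A]
    {L M : Type*} [AddCommGroup L] [Module R L] [Module A L] [IsScalarTower R A L]
    [AddCommGroup M] [Module R M] [Module A M] [IsScalarTower R A M] {n : ℕ}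
    (b : (Fin (n+2) → L) → L) (ρ : (Fin (n+1) → L) → A → A)
    (ψ : (Fin (n+1) → L) → M → M) : Prop :=
  IsRep R b ψ ∧
  (∀ (x : Fin (n+1) → L) (i : Fin (n+1)) (a : A),
    ψ (Function.update x i (a • x i)) = a • ψ x) ∧
  (∀ (x : Fin (n+1) → L) (a : A) (m : M), ψ x (a • m) = a • ψ x m + ρ x a • m)

/-- The fundamental bracket on `∧^{n+1} L`, evaluated on decomposable elements,
viewed inside the exterior algebra. -/
noncomputable def Fbr (R : Type*) [CommRing R] {L : Type*} [AddCommGroup L] [Module R L]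
    {n : ℕ} (b : (Fin (n+2) → L) → L) (X W : Fin (n+1) → L) : ExteriorAlgebra R L :=
  ∑ i : Fin (n+1),
    ExteriorAlgebra.ιMulti R (n+1) (Function.update W i (b (Fin.snoc X (W i))))

/-- for an (n+2)-Lie algebra, the fundamental bracket satisfies the
left Leibniz identity `[X,[Y,Z]_F]_F = [[X,Y]_F,Z]_F + [Y,[X,Z]_F]_F`
(expanded by bilinearity on decomposable elements). -/
theorem fundamental_bracket_leibniz (R : Type*) [Field R] [CharZero R]
    {L : Type*} [AddCommGroup L] [Module R L] {n : ℕ}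
    (b : (Fin (n+2) → L) → L)
    (hmul : IsMultilin R b) (halt : IsAlt b) (hfil : Filippov b)
    (X Y Z : Fin (n+1) → L) :
    ∑ j : Fin (n+1), Fbr R b X (Function.update Z j (b (Fin.snoc Y (Z j))))
      = ∑ i : Fin (n+1), Fbr R b (Function.update Y i (b (Fin.snoc X (Y i)))) Z
        + ∑ j : Fin (n+1), Fbr R b Y (Function.update Z j (b (Fin.snoc X (Z j)))) := by
  classical
  set f := ExteriorAlgebra.ιMulti R (n+1) (M := L) with hf
  -- Filippov consequence: commutator of derivations
  have key : ∀ w : L,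
      b (Fin.snoc X (b (Fin.snoc Y w))) - b (Fin.snoc Y (b (Fin.snoc X w)))
        = ∑ k : Fin (n+1), b (Fin.snoc (Function.update Y k (b (Fin.snoc X (Y k)))) w) := by
    intro w
    have h := hfil X (Fin.snoc Y w)
    rw [Fin.sum_univ_castSucc] at h
    simp only [Fin.snoc_castSucc, Fin.snoc_last, Fin.update_snoc_last, ← Fin.snoc_update] at h
    rw [h, add_sub_cancel_right]
  have comm2 : (∑ j : Fin (n+1), Fbr R b Y (Function.update Z j (b (Fin.snoc X (Z j)))))
      = ∑ j : Fin (n+1), ∑ i : Fin (n+1),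
          f (Function.update (Function.update Z i (b (Fin.snoc X (Z i)))) j
            (b (Fin.snoc Y ((Function.update Z i (b (Fin.snoc X (Z i)))) j)))) := by
    unfold Fbr
    exact Finset.sum_comm
  rw [← sub_eq_iff_eq_add, comm2]
  unfold Fbr
  simp only [← Finset.sum_sub_distrib]
  have hdiag : ∀ j : Fin (n+1),
      (∑ i : Fin (n+1),
        (f (Function.update (Function.update Z j (b (Fin.snoc Y (Z j)))) i
              (b (Fin.snoc X ((Function.update Z j (b (Fin.snoc Y (Z j)))) i))))
         - f (Function.update (Function.update Z i (b (Fin.snoc X (Z i)))) j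
              (b (Fin.snoc Y ((Function.update Z i (b (Fin.snoc X (Z i)))) j))))))
      = f (Function.update Z j (b (Fin.snoc X (b (Fin.snoc Y (Z j))))))
        - f (Function.update Z j (b (Fin.snoc Y (b (Fin.snoc X (Z j)))))) := by
    intro j
    rw [Finset.sum_eq_single j]
    · simp [Function.update_self, Function.update_idem]
    · intro i _ hij
      rw [sub_eq_zero]
      congr 1
      rw [Function.update_of_ne hij, Function.update_of_ne hij.symm]
      exact Function.update_comm hij.symm _ _ Z
    · intro h; exact absurd (Finset.mem_univ j) h
  calc
    (∑ j : Fin (n+1), ∑ i : Fin (n+1),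
        (f (Function.update (Function.update Z j (b (Fin.snoc Y (Z j)))) i
              (b (Fin.snoc X ((Function.update Z j (b (Fin.snoc Y (Z j)))) i))))
         - f (Function.update (Function.update Z i (b (Fin.snoc X (Z i)))) j
              (b (Fin.snoc Y ((Function.update Z i (b (Fin.snoc X (Z i)))) j))))))
      = ∑ j : Fin (n+1),
          (f (Function.update Z j (b (Fin.snoc X (b (Fin.snoc Y (Z j))))))
            - f (Function.update Z j (b (Fin.snoc Y (b (Fin.snoc X (Z j))))))) :=
        Finset.sum_congr rfl fun j _ => hdiag j
    _ = ∑ j : Fin (n+1), ∑ k : Fin (n+1),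
          f (Function.update Z j (b (Fin.snoc (Function.update Y k (b (Fin.snoc X (Y k)))) (Z j)))) := by
        refine Finset.sum_congr rfl fun j _ => ?_
        rw [← f.map_update_sub, key (Z j), f.map_update_sum]
    _ = ∑ k : Fin (n+1), ∑ j : Fin (n+1),
          f (Function.update Z j (b (Fin.snoc (Function.update Y k (b (Fin.snoc X (Y k)))) (Z j)))) :=
        Finset.sum_comm
end

section
/- If (L, A, [·,…,·], ρ) is an n-Lie Rinehart algebra, then (∧^{n-1}L, A, [·,·]_F, ρ̂) is a Leibniz-Rinehart algebra, where ρ̂(x_1∧⋯∧x_{n-1}) = ρ(x_1,…,x_{n-1}) and [·,·]_F is the fundamental bracket; in particular [X, aY]_F = a[X,Y]_F + ρ̂(X)(a)·Y for all a ∈ A and X,Y ∈ ∧^{n-1}L. -/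
open Function BigOperators

section Aux
variable {R : Type*} [CommRing R] {L : Type*} [AddCommGroup L] [Module R L]

lemma iota_update_add {m : ℕ} (W : Fin m → L) (j : Fin m) (u v : L) :
    ExteriorAlgebra.ιMulti R m (Function.update W j (u + v))
      = ExteriorAlgebra.ιMulti R m (Function.update W j u)
        + ExteriorAlgebra.ιMulti R m (Function.update W j v) :=
  map_add ((ExteriorAlgebra.ιMulti R m).toMultilinearMap.toLinearMap W j) u v

lemma iota_update_sum {m : ℕ} (W : Fin m → L) (j : Fin m) {ι : Type*} (s : Finset ι)
    (g : ι → L) :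
    ExteriorAlgebra.ιMulti R m (Function.update W j (∑ k ∈ s, g k))
      = ∑ k ∈ s, ExteriorAlgebra.ιMulti R m (Function.update W j (g k)) :=
  map_sum ((ExteriorAlgebra.ιMulti R m).toMultilinearMap.toLinearMap W j) g s

end Aux

/-- if `(L,A,[·,…,·],ρ)` is an (n+2)-Lie Rinehart algebra, then
`(∧^{n+1}L, A, [·,·]_F, ρ̂)` is a Leibniz-Rinehart algebra (all axioms spelled out on
decomposable elements, with the `A`-action on `∧^{n+1}L` scaling the first factor);
in particular `[X,aY]_F = a[X,Y]_F + ρ̂(X)(a)·Y`. -/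
theorem fundamental_is_LeibnizRinehart (R A : Type*) [Field R] [CharZero R]
    [CommRing A] [Algebra R A]
    {L : Type*} [AddCommGroup L] [Module R L] [Module A L] [IsScalarTower R A L] {n : ℕ}
    (b : (Fin (n+2) → L) → L) (ρ : (Fin (n+1) → L) → A → A)
    (h : IsNLieRinehart R A b ρ) :
    -- (1) Leibniz identity for [·,·]_F on decomposables
    (∀ X Y Z : Fin (n+1) → L,
      ∑ j : Fin (n+1), Fbr R b X (Function.update Z j (b (Fin.snoc Y (Z j))))
        = ∑ i : Fin (n+1), Fbr R b (Function.update Y i (b (Fin.snoc X (Y i)))) Z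
          + ∑ j : Fin (n+1), Fbr R b Y (Function.update Z j (b (Fin.snoc X (Z j))))) ∧
    -- (2) ρ̂([X,Y]_F) = ρ̂(X)ρ̂(Y) - ρ̂(Y)ρ̂(X)
    (∀ (X Y : Fin (n+1) → L) (a : A),
      ∑ i : Fin (n+1), ρ (Function.update Y i (b (Fin.snoc X (Y i)))) a
        = ρ X (ρ Y a) - ρ Y (ρ X a)) ∧
    -- (3) ρ̂(aX) = a ρ̂(X)
    (∀ (X : Fin (n+1) → L) (a : A),
      ρ (Function.update X 0 (a • X 0)) = a • ρ X) ∧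
    -- (4) [X, aY]_F = a [X,Y]_F + ρ̂(X)(a) Y
    (∀ (X Y : Fin (n+1) → L) (a : A),
      Fbr R b X (Function.update Y 0 (a • Y 0))
        = (∑ i : Fin (n+1),
            ExteriorAlgebra.ιMulti R (n+1)
              (Function.update (Function.update Y i (b (Fin.snoc X (Y i)))) 0
                (a • (Function.update Y i (b (Fin.snoc X (Y i)))) 0)))
          + ExteriorAlgebra.ιMulti R (n+1) (Function.update Y 0 (ρ X a • Y 0))) := by
  obtain ⟨hmul, halt, hfil, hder, hrep, hρA, hbA⟩ := h
  -- anchor compatibility in snoc form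
  have hsnoc : ∀ (X : Fin (n+1) → L) (z : L) (a : A),
      b (Fin.snoc X (a • z)) = a • b (Fin.snoc X z) + ρ X a • z := by
    intro X z a
    have := hbA (Fin.snoc X z) a
    simpa [Fin.snoc_last, Fin.update_snoc_last, Fin.init_snoc] using this
  refine ⟨?_, fun X Y a => (hrep.2.2.2.2.1 X Y a).symm, fun X a => hρA X 0 a, ?_⟩
  · -- Leibniz identity
    intro X Y Z
    simp only [Fbr]
    set w : Fin (n+1) → L := fun j => b (Fin.snoc Y (Z j)) with hw
    set u : Fin (n+1) → L := fun j => b (Fin.snoc X (Z j)) with hu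
    set f : Fin (n+1) → Fin (n+1) → ExteriorAlgebra R L := fun j i =>
      ExteriorAlgebra.ιMulti R (n+1)
        (Function.update (Function.update Z j (w j)) i
          (b (Fin.snoc X (Function.update Z j (w j) i)))) with hf
    set g : Fin (n+1) → Fin (n+1) → ExteriorAlgebra R L := fun j k =>
      ExteriorAlgebra.ιMulti R (n+1)
        (Function.update (Function.update Z j (u j)) k
          (b (Fin.snoc Y (Function.update Z j (u j) k)))) with hg
    have split : ∀ (p : Fin (n+1) → Fin (n+1) → ExteriorAlgebra R L),
        ∑ j : Fin (n+1), ∑ i : Fin (n+1), p j i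
          = ∑ j : Fin (n+1), p j j
            + ∑ j : Fin (n+1), ∑ i ∈ Finset.univ.erase j, p j i := by
      intro p
      rw [← Finset.sum_add_distrib]
      exact Finset.sum_congr rfl fun j _ =>
        (Finset.add_sum_erase _ _ (Finset.mem_univ j)).symm
    have hdiag : ∀ j, f j j
        = (∑ i : Fin (n+1), ExteriorAlgebra.ιMulti R (n+1)
            (Function.update Z j
              (b (Fin.snoc (Function.update Y i (b (Fin.snoc X (Y i)))) (Z j)))))
          + g j j := by
      intro j
      have e1 : f j j = ExteriorAlgebra.ιMulti R (n+1)
          (Function.update Z j (b (Fin.snoc X (b (Fin.snoc Y (Z j)))))) := by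
        simp [hf, Function.update_self, Function.update_idem, hw]
      have e2 : g j j = ExteriorAlgebra.ιMulti R (n+1)
          (Function.update Z j (b (Fin.snoc Y (u j)))) := by
        simp [hg, Function.update_self, Function.update_idem]
      rw [e1, e2, hfil X (Fin.snoc Y (Z j)), iota_update_sum, Fin.sum_univ_castSucc]
      congr 1
      · refine Finset.sum_congr rfl fun i _ => ?_
        congr 2
        rw [Fin.snoc_castSucc, ← Fin.snoc_update]
      · congr 2
        rw [Fin.snoc_last, Fin.update_snoc_last, hu]
    have hoff : ∀ j, ∀ i ∈ Finset.univ.erase j, f j i = g i j := by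
      intro j i hi
      have hij : i ≠ j := Finset.ne_of_mem_erase hi
      simp only [hf, hg]
      rw [Function.update_of_ne hij, Function.update_of_ne hij.symm,
        Function.update_comm hij]
    calc ∑ j : Fin (n+1), ∑ i : Fin (n+1), f j i
        = ∑ j : Fin (n+1), f j j + ∑ j : Fin (n+1), ∑ i ∈ Finset.univ.erase j, f j i :=
          split f
      _ = (∑ j : Fin (n+1), ((∑ i : Fin (n+1), ExteriorAlgebra.ιMulti R (n+1)
            (Function.update Z j
              (b (Fin.snoc (Function.update Y i (b (Fin.snoc X (Y i)))) (Z j))))) + g j j))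
          + ∑ j : Fin (n+1), ∑ i ∈ Finset.univ.erase j, g i j := by
          rw [Finset.sum_congr rfl fun j _ => hdiag j]
          congr 1
          exact Finset.sum_congr rfl fun j _ => Finset.sum_congr rfl fun i hi => hoff j i hi
      _ = (∑ i : Fin (n+1), ∑ j : Fin (n+1), ExteriorAlgebra.ιMulti R (n+1)
            (Function.update Z j
              (b (Fin.snoc (Function.update Y i (b (Fin.snoc X (Y i)))) (Z j)))))
          + (∑ j : Fin (n+1), g j j
            + ∑ i : Fin (n+1), ∑ j ∈ Finset.univ.erase i, g i j) := by
          rw [Finset.sum_add_distrib]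
          rw [Finset.sum_comm' (s := Finset.univ) (t := fun j => Finset.univ.erase j)
            (t' := Finset.univ) (s' := fun i => Finset.univ.erase i)
            (f := fun j i => g i j)
            (by intro x y; simp [Finset.mem_erase, ne_comm])]
          · rw [Finset.sum_comm (f := fun j i => ExteriorAlgebra.ιMulti R (n+1)
              (Function.update Z j
                (b (Fin.snoc (Function.update Y i (b (Fin.snoc X (Y i)))) (Z j)))))]
            abel
      _ = _ := by
          rw [← split g]
  · -- [X, aY] = a[X,Y] + ρ(X)(a) Y
    intro X Y a
    simp only [Fbr]
    rw [Fin.sum_univ_succ, Fin.sum_univ_succ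
      (f := fun i : Fin (n+1) =>
        ExteriorAlgebra.ιMulti R (n+1)
          (Function.update (Function.update Y i (b (Fin.snoc X (Y i)))) 0
            (a • (Function.update Y i (b (Fin.snoc X (Y i)))) 0)))]
    have h0 : ExteriorAlgebra.ιMulti R (n+1)
        (Function.update (Function.update Y 0 (a • Y 0)) 0
          (b (Fin.snoc X (Function.update Y 0 (a • Y 0) 0))))
        = ExteriorAlgebra.ιMulti R (n+1)
            (Function.update Y 0 (a • b (Fin.snoc X (Y 0))))
          + ExteriorAlgebra.ιMulti R (n+1) (Function.update Y 0 (ρ X a • Y 0)) := by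
      rw [Function.update_self, Function.update_idem, hsnoc, iota_update_add]
    have hsuccL : ∀ i : Fin n,
        ExteriorAlgebra.ιMulti R (n+1)
          (Function.update (Function.update Y 0 (a • Y 0)) i.succ
            (b (Fin.snoc X (Function.update Y 0 (a • Y 0) i.succ))))
        = ExteriorAlgebra.ιMulti R (n+1)
            (Function.update (Function.update Y i.succ (b (Fin.snoc X (Y i.succ)))) 0
              (a • (Function.update Y i.succ (b (Fin.snoc X (Y i.succ)))) 0)) := by
      intro i
      rw [Function.update_of_ne (Fin.succ_ne_zero i),
        Function.update_of_ne (Fin.succ_ne_zero i).symm,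
        Function.update_comm (Fin.succ_ne_zero i).symm]
    have hr0 : (Function.update (Function.update Y 0 (b (Fin.snoc X (Y 0)))) 0
          (a • (Function.update Y 0 (b (Fin.snoc X (Y 0)))) 0))
        = Function.update Y 0 (a • b (Fin.snoc X (Y 0))) := by
      rw [Function.update_self, Function.update_idem]
    rw [h0, hr0, Finset.sum_congr rfl fun i _ => hsuccL i]
    abel
end

section
/- Let (L, A, [·,…,·], ρ) be an n-Lie Rinehart algebra. On E = L ⊕ A define [(x_1,a_1),…,(x_n,a_n)]' = ([x_1,…,x_n], Σ_{i=1}^n (-1)^{n-i} ρ(x_1,…,x̂_i,…,x_n)(a_i)) and ρ'((x_1,a_1),…,(x_{n-1},a_{n-1})) = ρ(x_1,…,x_{n-1}), with A-action b(x,a) = (bx, ba). Then (E, A, [·,…,·]', ρ') is an n-Lie Rinehart algebra. -/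
open Function BigOperators

set_option linter.unusedSectionVars false
set_option maxHeartbeats 1000000 in
section
namespace NLRExt


lemma val_sa {m : ℕ} (p : Fin (m+1)) (k : Fin m) :
    ((p.succAbove k : Fin (m+1)) : ℕ) = if (k:ℕ) < (p:ℕ) then (k:ℕ) else (k:ℕ)+1 := by
  rcases lt_or_ge (Fin.castSucc k) p with h | h
  · rw [Fin.succAbove_of_castSucc_lt _ _ h]
    have : (k:ℕ) < (p:ℕ) := h
    simp [this]
  · rw [Fin.succAbove_of_le_castSucc _ _ h]
    have : (p:ℕ) ≤ (k:ℕ) := h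
    simp [Nat.not_lt_of_le this]

lemma removeNth_update_succAbove {α : Type*} {m : ℕ} (p : Fin (m+1)) (j : Fin m) (v : α)
    (x : Fin (m+1) → α) :
    p.removeNth (Function.update x (p.succAbove j) v) = Function.update (p.removeNth x) j v := by
  funext k
  simp only [Fin.removeNth, Function.update_apply, Fin.succAbove_right_injective.eq_iff]

lemma removeNth_castSucc_snoc {α : Type*} {m : ℕ} (k : Fin (m+1)) (x : Fin (m+1) → α) (v : α) :
    (k.castSucc).removeNth (Fin.snoc x v : Fin (m+2) → α) = Fin.snoc (k.removeNth x) v := by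
  funext l
  refine Fin.lastCases ?_ ?_ l
  · have h1 : (k.castSucc).succAbove (Fin.last m) = Fin.last (m+1) := by
      rw [Fin.succAbove_castSucc_of_le _ _ (Fin.le_last k), Fin.succ_last]
    show (Fin.snoc x v : Fin (m+2) → α) ((k.castSucc).succAbove (Fin.last m)) = _
    rw [h1, Fin.snoc_last, Fin.snoc_last]
  · intro l'
    show (Fin.snoc x v : Fin (m+2) → α) ((k.castSucc).succAbove l'.castSucc) = _
    rw [Fin.castSucc_succAbove_castSucc, Fin.snoc_castSucc, Fin.snoc_castSucc]
    rfl

lemma removeNth_last_snoc {α : Type*} {m : ℕ} (x : Fin (m+1) → α) (v : α) :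
    (Fin.last (m+1)).removeNth (Fin.snoc x v : Fin (m+2) → α) = x := by
  rw [Fin.removeNth_last, Fin.init_snoc]

lemma sum_succAbove_comm {A : Type*} [AddCommGroup A] {m : ℕ}
    (G : Fin (m+1) → Fin (m+1) → A) :
    ∑ j, ∑ i : Fin m, G (j.succAbove i) j = ∑ i, ∑ p : Fin m, G i (i.succAbove p) := by
  have h1 : ∀ j, ∑ i : Fin m, G (j.succAbove i) j = (∑ i, G i j) - G j j := by
    intro j
    rw [Fin.sum_univ_succAbove (fun i => G i j) j]
    abel
  have h2 : ∀ i, ∑ p : Fin m, G i (i.succAbove p) = (∑ j, G i j) - G i i := by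
    intro i
    rw [Fin.sum_univ_succAbove (fun j => G i j) i]
    abel
  simp only [h1, h2]
  rw [Finset.sum_sub_distrib, Finset.sum_sub_distrib, Finset.sum_comm]

/-- L1: removing either of two adjacent equal entries gives the same tuple. -/
lemma removeNth_adj {α : Type*} {m : ℕ} (x : Fin (m+2) → α) (t : Fin (m+1))
    (h : x t.castSucc = x t.succ) :
    (t.castSucc).removeNth x = (t.succ).removeNth x := by
  funext k
  show x (t.castSucc.succAbove k) = x (t.succ.succAbove k)
  rcases eq_or_ne (k:ℕ) (t:ℕ) with hk | hk
  · have h1 : t.castSucc.succAbove k = t.succ := by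
      apply Fin.ext; rw [val_sa]; simp only [Fin.coe_castSucc, Fin.val_succ]
      split_ifs <;> omega
    have h2 : t.succ.succAbove k = t.castSucc := by
      apply Fin.ext; rw [val_sa]; simp only [Fin.coe_castSucc, Fin.val_succ]
      split_ifs with hs <;> omega
    rw [h1, h2, h]
  · congr 1
    apply Fin.ext
    rw [val_sa, val_sa]
    simp only [Fin.coe_castSucc, Fin.val_succ]
    split_ifs <;> omega

/-- L2: removeNth commutes with swapping two non-removed entries. -/
lemma removeNth_comp_swap {α : Type*} {m : ℕ} (i : Fin (m+1)) (p q : Fin m)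
    (x : Fin (m+1) → α) :
    i.removeNth (x ∘ Equiv.swap (i.succAbove p) (i.succAbove q))
      = (i.removeNth x) ∘ Equiv.swap p q := by
  funext k
  show x (Equiv.swap (i.succAbove p) (i.succAbove q) (i.succAbove k))
      = x (i.succAbove (Equiv.swap p q k))
  congr 1
  rcases eq_or_ne k p with rfl | hkp
  · rw [Equiv.swap_apply_left, Equiv.swap_apply_left]
  · rcases eq_or_ne k q with rfl | hkq
    · rw [Equiv.swap_apply_right, Equiv.swap_apply_right]
    · rw [Equiv.swap_apply_of_ne_of_ne (fun hc => hkp (Fin.succAbove_right_injective hc))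
        (fun hc => hkq (Fin.succAbove_right_injective hc)),
        Equiv.swap_apply_of_ne_of_ne hkp hkq]

/-- L3: removing position t from x∘swap(t,t+1) is removing position t+1 from x. -/
lemma removeNth_swap_adj {α : Type*} {m : ℕ} (t : Fin (m+1)) (x : Fin (m+2) → α) :
    (t.castSucc).removeNth (x ∘ Equiv.swap t.castSucc t.succ) = (t.succ).removeNth x := by
  funext k
  show x (Equiv.swap t.castSucc t.succ (t.castSucc.succAbove k)) = x (t.succ.succAbove k)
  rcases eq_or_ne (k:ℕ) (t:ℕ) with hk | hk
  · have h1 : t.castSucc.succAbove k = t.succ := by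
      apply Fin.ext; rw [val_sa]; simp only [Fin.coe_castSucc, Fin.val_succ]
      split_ifs <;> omega
    have h2 : t.succ.succAbove k = t.castSucc := by
      apply Fin.ext; rw [val_sa]; simp only [Fin.coe_castSucc, Fin.val_succ]
      split_ifs <;> omega
    rw [h1, Equiv.swap_apply_right, h2]
  · have h3 : t.castSucc.succAbove k = t.succ.succAbove k := by
      apply Fin.ext; rw [val_sa, val_sa]
      simp only [Fin.coe_castSucc, Fin.val_succ]
      split_ifs <;> omega
    have h4 : t.succ.succAbove k ≠ t.castSucc := by
      intro hc
      have := congrArg Fin.val hc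
      rw [val_sa] at this; simp only [Fin.coe_castSucc, Fin.val_succ] at this
      split_ifs at this <;> omega
    rw [h3, Equiv.swap_apply_of_ne_of_ne h4 (Fin.succAbove_ne t.succ k)]


lemma sa_cast_last {m : ℕ} (k : Fin (m+1)) :
    (k.castSucc).succAbove (Fin.last m) = Fin.last (m+1) := by
  rw [Fin.succAbove_castSucc_of_le _ _ (Fin.le_last k), Fin.succ_last]
section Sign


variable {R L N : Type*} [CommRing R] [AddCommGroup L] [Module R L]
  [AddCommGroup N] [Module R N]

/-- Package a multilinear alternating bare function as an `AlternatingMap`. -/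
def mkAlternating {m : ℕ} (f : (Fin m → L) → N) (hm : IsMultilin R f) (ha : IsAlt f) :
    AlternatingMap R L N (Fin m) where
  toFun := f
  map_update_add' := by
    intro dec x i u v
    have : dec = instDecidableEqFin m := Subsingleton.elim _ _
    subst this
    exact hm.1 x i u v
  map_update_smul' := by
    intro dec x i c u
    have : dec = instDecidableEqFin m := Subsingleton.elim _ _
    subst this
    exact hm.2 x i c u
  map_eq_zero_of_eq' := fun v i j h hij => ha v i j hij h

@[simp] lemma mkAlternating_apply {m : ℕ} (f : (Fin m → L) → N) (hm : IsMultilin R f)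
    (ha : IsAlt f) (x : Fin m → L) : mkAlternating f hm ha x = f x := rfl

variable {R L N : Type*} [CommRing R] [AddCommGroup L] [Module R L]
  [AddCommGroup N] [Module R N]

lemma alt_sign_aux {m : ℕ} (F : AlternatingMap R L N (Fin (m+1))) :
    ∀ (d : ℕ) (x : Fin (m+2) → L) (i j : Fin (m+2)), (j:ℕ) = (i:ℕ) + d + 1 → x i = x j →
      ((-1:ℤ)^(i:ℕ)) • F (i.removeNth x) + ((-1:ℤ)^(j:ℕ)) • F (j.removeNth x) = 0 := by
  intro d
  induction d with
  | zero =>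
    intro x i j hj hx
    have hi : (i:ℕ) < m + 1 := by omega
    set t : Fin (m+1) := ⟨(i:ℕ), hi⟩ with ht
    have hic : i = t.castSucc := by apply Fin.ext; simp [ht]
    have hjs : j = t.succ := by apply Fin.ext; simp [ht]; omega
    have hr : i.removeNth x = j.removeNth x := by
      rw [hic, hjs]; exact removeNth_adj x t (by rw [← hic, ← hjs]; exact hx)
    rw [hr, hj, pow_succ, mul_neg_one, neg_smul, add_neg_cancel]
  | succ d IH =>
    intro x i j hj hx
    have hjpos : (0:ℕ) < (j:ℕ) := by omega
    have hjm : (j:ℕ) - 1 < m + 1 := by omega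
    set t : Fin (m+1) := ⟨(j:ℕ)-1, hjm⟩ with ht
    have hjs : j = t.succ := by apply Fin.ext; simp [ht]; omega
    set j1 : Fin (m+2) := t.castSucc with hj1
    have hj1v : (j1:ℕ) = (i:ℕ) + d + 1 := by simp [hj1, ht]; omega
    have hij1 : i ≠ j1 := by intro hc; rw [hc] at hj1v; omega
    have hij : i ≠ j := by intro hc; rw [hc] at hj; omega
    set x' : Fin (m+2) → L := x ∘ Equiv.swap j1 j with hx'
    have hx'i : x' i = x i := by
      simp only [hx', comp_apply]
      rw [Equiv.swap_apply_of_ne_of_ne hij1 hij]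
    have hx'j1 : x' j1 = x j := by
      simp only [hx', comp_apply, Equiv.swap_apply_left]
    have hIH := IH x' i j1 hj1v (by rw [hx'i, hx'j1]; exact hx)
    have hrm1 : j1.removeNth x' = j.removeNth x := by
      rw [hj1, hjs, hx', hjs]; exact removeNth_swap_adj t x
    obtain ⟨p, hp⟩ := Fin.exists_succAbove_eq hij1.symm
    obtain ⟨q, hq⟩ := Fin.exists_succAbove_eq hij.symm
    have hpq : p ≠ q := by
      intro hc; rw [hc, hq] at hp
      rw [← hp] at hj1v; omega
    have hrm2 : F (i.removeNth x') = - F (i.removeNth x) := by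
      rw [hx', ← hp, ← hq, removeNth_comp_swap]
      exact AlternatingMap.map_swap F _ hpq
    rw [hrm1, hrm2, smul_neg] at hIH
    have hjj1 : ((-1:ℤ)^(j:ℕ)) = -((-1:ℤ)^(j1:ℕ)) := by
      have : (j:ℕ) = (j1:ℕ) + 1 := by simp [hj1, ht]; omega
      rw [this, pow_succ, mul_neg_one]
    rw [hjj1, neg_smul, ← sub_eq_add_neg, sub_eq_zero]
    rw [neg_add_eq_zero] at hIH
    exact hIH

lemma alt_sign_pair {m : ℕ} {A : Type*} [CommRing A] [Algebra R A] [Module R A]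
    (F : AlternatingMap R L A (Fin (m+1))) (x : Fin (m+2) → L) (i j : Fin (m+2))
    (hij : i ≠ j) (hx : x i = x j) :
    ((-1:A)^(i:ℕ)) * F (i.removeNth x) + ((-1:A)^(j:ℕ)) * F (j.removeNth x) = 0 := by
  have key : ∀ (u v : Fin (m+2)), (u:ℕ) < (v:ℕ) → x u = x v →
      ((-1:A)^(u:ℕ)) * F (u.removeNth x) + ((-1:A)^(v:ℕ)) * F (v.removeNth x) = 0 := by
    intro u v huv hxe
    have := alt_sign_aux F ((v:ℕ) - (u:ℕ) - 1) x u v (by omega) hxe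
    have hc : ∀ (e : ℕ) (t : A), ((-1:ℤ)^e) • t = ((-1:A)^e) * t := by
      intro e t
      rw [zsmul_eq_mul]
      push_cast
      ring
    rwa [hc, hc] at this
  rcases lt_trichotomy (i:ℕ) (j:ℕ) with hlt | heq | hgt
  · exact key i j hlt hx
  · exact absurd (Fin.ext heq) hij
  · rw [add_comm]; exact key j i hgt hx.symm


end Sign
section Main
variable {R A L : Type*} [CommRing R] [CommRing A] [Algebra R A]
  [AddCommGroup L] [Module R L] {n : ℕ}

lemma smulA' (e : ℕ) (t : A) : ((-1:R)^e) • t = ((-1:A)^e) * t := by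
  rw [Algebra.smul_def, map_pow, map_neg, map_one]

lemma eps_last' : ((-1:A))^(n + 1 + ((Fin.last (n+1) : Fin (n+2)):ℕ)) = 1 := by
  rw [Fin.val_last]
  have he : n + 1 + (n + 1) = 2 * (n + 1) := by ring
  rw [he, pow_mul, neg_one_sq, one_pow]

variable (ρ : (Fin (n+1) → L) → A → A)

/-- The second component of the extended bracket. -/
def auxT (x : Fin (n+2) → L) (a : Fin (n+2) → A) : A :=
  ∑ i : Fin (n+2), ((-1:A)^(n + 1 + (i:ℕ))) * ρ (i.removeNth x) (a i)

lemma auxT_def (x : Fin (n+2) → L) (a : Fin (n+2) → A) :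
    auxT ρ x a = ∑ i : Fin (n+2), ((-1:A)^(n + 1 + (i:ℕ))) * ρ (i.removeNth x) (a i) := rfl

variable {ρ}
variable (Hadd : ∀ (X : Fin (n+1) → L) (u v : A), ρ X (u + v) = ρ X u + ρ X v)
variable (Hsmul : ∀ (X : Fin (n+1) → L) (c : R) (u : A), ρ X (c • u) = c • ρ X u)

include Hadd in
lemma rho_sum (X : Fin (n+1) → L) {k : ℕ} (f : Fin k → A) :
    ρ X (∑ i, f i) = ∑ i, ρ X (f i) :=
  map_sum (AddMonoidHom.mk' (ρ X) (Hadd X)) f Finset.univ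

include Hsmul in
lemma rho_eps (X : Fin (n+1) → L) (e : ℕ) (t : A) :
    ρ X (((-1:A)^e) * t) = ((-1:A)^e) * ρ X t := by
  rw [← smulA' (R := R), Hsmul, smulA']

lemma auxT_snoc (x : Fin (n+1) → L) (a : Fin (n+1) → A) (v : L) (s : A) :
    auxT ρ (Fin.snoc x v) (Fin.snoc a s)
      = (∑ k : Fin (n+1), ((-1:A)^(n + 1 + (k:ℕ))) * ρ (Fin.snoc (k.removeNth x) v) (a k))
        + ρ x s := by
  rw [auxT_def, Fin.sum_univ_castSucc]
  congr 1
  · refine Finset.sum_congr rfl fun k _ => ?_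
    rw [removeNth_castSucc_snoc, Fin.snoc_castSucc]
    simp only [Fin.coe_castSucc]
  · rw [removeNth_last_snoc, Fin.snoc_last, eps_last', one_mul]

variable (Hlin : IsMultilin R ρ) (Halt : IsAlt ρ)

include Hlin in
lemma rho_upd_add (X : Fin (n+1) → L) (p : Fin (n+1)) (u v : L) (s : A) :
    ρ (Function.update X p (u + v)) s
      = ρ (Function.update X p u) s + ρ (Function.update X p v) s := by
  have := congrFun (Hlin.1 X p u v) s
  simpa using this

include Hlin in
lemma rho_upd_smul (X : Fin (n+1) → L) (p : Fin (n+1)) (c : R) (u : L) (s : A) :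
    ρ (Function.update X p (c • u)) s = c • ρ (Function.update X p u) s := by
  have := congrFun (Hlin.2 X p c u) s
  simpa using this

include Halt in
lemma rho_alt (X : Fin (n+1) → L) (p q : Fin (n+1)) (hpq : p ≠ q) (hX : X p = X q) (s : A) :
    ρ X s = 0 := by
  have := congrFun (Halt X p q hpq hX) s
  simpa using this

include Hadd Hlin in
lemma auxT_add (x : Fin (n+2) → L) (a : Fin (n+2) → A) (i : Fin (n+2)) (u v : L) (s t : A) :
    auxT ρ (Function.update x i (u + v)) (Function.update a i (s + t))
      = auxT ρ (Function.update x i u) (Function.update a i s)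
        + auxT ρ (Function.update x i v) (Function.update a i t) := by
  rw [auxT_def, auxT_def, auxT_def, ← Finset.sum_add_distrib]
  refine Finset.sum_congr rfl fun k _ => ?_
  rcases eq_or_ne k i with rfl | hki
  · rw [Fin.removeNth_update, Fin.removeNth_update, Fin.removeNth_update,
      Function.update_self, Function.update_self, Function.update_self, Hadd, mul_add]
  · obtain ⟨p, hp⟩ := Fin.exists_succAbove_eq hki.symm
    rw [Function.update_of_ne hki, Function.update_of_ne hki, Function.update_of_ne hki, ← hp,
      removeNth_update_succAbove, removeNth_update_succAbove, removeNth_update_succAbove,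
      rho_upd_add Hlin, mul_add]

include Hsmul Hlin in
lemma auxT_smul (x : Fin (n+2) → L) (a : Fin (n+2) → A) (i : Fin (n+2)) (c : R) (u : L) (s : A) :
    auxT ρ (Function.update x i (c • u)) (Function.update a i (c • s))
      = c • auxT ρ (Function.update x i u) (Function.update a i s) := by
  rw [auxT_def, auxT_def, Finset.smul_sum]
  refine Finset.sum_congr rfl fun k _ => ?_
  rcases eq_or_ne k i with rfl | hki
  · rw [Fin.removeNth_update, Fin.removeNth_update, Function.update_self, Function.update_self,
      Hsmul, mul_smul_comm]
  · obtain ⟨p, hp⟩ := Fin.exists_succAbove_eq hki.symm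
    rw [Function.update_of_ne hki, Function.update_of_ne hki, ← hp,
      removeNth_update_succAbove, removeNth_update_succAbove, rho_upd_smul Hlin, mul_smul_comm]

include Hlin Halt in
lemma auxT_alt (x : Fin (n+2) → L) (a : Fin (n+2) → A) (i j : Fin (n+2)) (hij : i ≠ j)
    (hx : x i = x j) (ha : a i = a j) : auxT ρ x a = 0 := by
  have hmulA : IsMultilin R (fun t : Fin (n+1) → L => ρ t (a i)) := by
    constructor
    · intro X p u v; exact rho_upd_add Hlin X p u v (a i)
    · intro X p c u; exact rho_upd_smul Hlin X p c u (a i)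
  have haltA : IsAlt (fun t : Fin (n+1) → L => ρ t (a i)) := by
    intro X p q hpq hX; exact rho_alt Halt X p q hpq hX (a i)
  set F := mkAlternating (fun t : Fin (n+1) → L => ρ t (a i)) hmulA haltA with hF
  have hpair : ((-1:A)^(i:ℕ)) * ρ (i.removeNth x) (a i)
      + ((-1:A)^(j:ℕ)) * ρ (j.removeNth x) (a i) = 0 :=
    alt_sign_pair F x i j hij hx
  have hvan : ∀ k ∈ (Finset.univ : Finset (Fin (n+2))), k ∉ ({i, j} : Finset (Fin (n+2))) →
      ((-1:A)^(n + 1 + (k:ℕ))) * ρ (k.removeNth x) (a k) = 0 := by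
    intro k _ hk
    simp only [Finset.mem_insert, Finset.mem_singleton, not_or] at hk
    obtain ⟨p, hp⟩ := Fin.exists_succAbove_eq (Ne.symm hk.1)
    obtain ⟨q, hq⟩ := Fin.exists_succAbove_eq (Ne.symm hk.2)
    have hpq : p ≠ q := by
      intro hc; apply hij; rw [← hp, hc, hq]
    have hXeq : (k.removeNth x) p = (k.removeNth x) q := by
      show x (k.succAbove p) = x (k.succAbove q)
      rw [hp, hq]; exact hx
    rw [rho_alt Halt _ p q hpq hXeq, mul_zero]
  rw [auxT_def, ← Finset.sum_subset (Finset.subset_univ ({i, j} : Finset (Fin (n+2)))) hvan,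
    Finset.sum_pair hij]
  calc ((-1:A)^(n + 1 + (i:ℕ))) * ρ (i.removeNth x) (a i)
        + ((-1:A)^(n + 1 + (j:ℕ))) * ρ (j.removeNth x) (a j)
      = ((-1:A)^(n+1)) * (((-1:A)^(i:ℕ)) * ρ (i.removeNth x) (a i)
          + ((-1:A)^(j:ℕ)) * ρ (j.removeNth x) (a i)) := by
        rw [← ha]
        rw [pow_add, pow_add]; ring
    _ = 0 := by rw [hpair, mul_zero]
end Main

section Fil
variable {R A L : Type*} [CommRing R] [CommRing A] [Algebra R A]
  [AddCommGroup L] [Module R L] {n : ℕ}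
variable {b : (Fin (n+2) → L) → L} {ρ : (Fin (n+1) → L) → A → A}
variable (Hadd : ∀ (X : Fin (n+1) → L) (u v : A), ρ X (u + v) = ρ X u + ρ X v)
variable (Hsmul : ∀ (X : Fin (n+1) → L) (c : R) (u : A), ρ X (c • u) = c • ρ X u)
variable (Hcomm : ∀ (x y : Fin (n+1) → L) (m : A),
    ρ x (ρ y m) - ρ y (ρ x m)
      = ∑ i : Fin (n+1), ρ (Function.update y i (b (Fin.snoc x (y i)))) m)
variable (Hcompat : ∀ (x : Fin n → L) (y : Fin (n+2) → L) (m : A),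
    ρ (Fin.snoc x (b y)) m
      = ∑ i : Fin (n+2), ((-1 : R) ^ (n + 1 + (i : ℕ))) •
          ρ (i.removeNth y) (ρ (Fin.snoc x (y i)) m))

include Hadd Hsmul Hcomm Hcompat in
lemma auxT_filippov (x : Fin (n+1) → L) (a : Fin (n+1) → A)
    (y : Fin (n+2) → L) (c : Fin (n+2) → A) :
    auxT ρ (Fin.snoc x (b y)) (Fin.snoc a (auxT ρ y c))
      = ∑ j : Fin (n+2), auxT ρ (Function.update y j (b (Fin.snoc x (y j))))
          (Function.update c j (auxT ρ (Fin.snoc x (y j)) (Fin.snoc a (c j)))) := by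
  classical
  -- abbreviations
  set ε : ℕ → A := fun e => ((-1:A)^(n + 1 + e)) with hε
  set P : Fin (n+1) → Fin (n+2) → A :=
    fun k j => ρ (j.removeNth y) (ρ (Fin.snoc (k.removeNth x) (y j)) (a k)) with hP
  set Q1 : Fin (n+2) → A := fun j => ρ x (ρ (j.removeNth y) (c j)) with hQ1
  set Q2 : Fin (n+2) → A := fun j => ρ (j.removeNth y) (ρ x (c j)) with hQ2
  -- LHS
  have hLHS : auxT ρ (Fin.snoc x (b y)) (Fin.snoc a (auxT ρ y c))
      = (∑ j : Fin (n+2), ∑ k : Fin (n+1), ε (j:ℕ) * (ε (k:ℕ) * P k j))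
        + ∑ j : Fin (n+2), ε (j:ℕ) * Q1 j := by
    rw [auxT_snoc]
    congr 1
    · have stepA : ∀ k : Fin (n+1), ρ (Fin.snoc (k.removeNth x) (b y)) (a k)
          = ∑ j : Fin (n+2), ε (j:ℕ) * P k j := by
        intro k
        rw [Hcompat (k.removeNth x) y (a k)]
        refine Finset.sum_congr rfl fun j _ => ?_
        rw [smulA' (A := A)]
      calc (∑ k : Fin (n+1), ε (k:ℕ) * ρ (Fin.snoc (k.removeNth x) (b y)) (a k))
          = ∑ k : Fin (n+1), ∑ j : Fin (n+2), ε (k:ℕ) * (ε (j:ℕ) * P k j) := by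
            refine Finset.sum_congr rfl fun k _ => ?_
            rw [stepA, Finset.mul_sum]
        _ = ∑ j : Fin (n+2), ∑ k : Fin (n+1), ε (j:ℕ) * (ε (k:ℕ) * P k j) := by
            rw [Finset.sum_comm]
            refine Finset.sum_congr rfl fun j _ => Finset.sum_congr rfl fun k _ => ?_
            ring
    · rw [auxT_def, rho_sum Hadd]
      refine Finset.sum_congr rfl fun j _ => ?_
      rw [rho_eps Hsmul]
  rw [hLHS]
  -- RHS
  have hRHSj : ∀ j : Fin (n+2),
      auxT ρ (Function.update y j (b (Fin.snoc x (y j))))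
          (Function.update c j (auxT ρ (Fin.snoc x (y j)) (Fin.snoc a (c j))))
        = (ε (j:ℕ) * ρ (j.removeNth y) (auxT ρ (Fin.snoc x (y j)) (Fin.snoc a (c j)))
            + ∑ i' : Fin (n+1),
              ε ((j.succAbove i' : Fin (n+2)):ℕ) *
                ρ ((j.succAbove i').removeNth (Function.update y j (b (Fin.snoc x (y j)))))
                  (c (j.succAbove i'))) := by
    intro j
    rw [auxT_def, Fin.sum_univ_succAbove _ j]
    congr 1
    · rw [Fin.removeNth_update, Function.update_self]
    · refine Finset.sum_congr rfl fun i' _ => ?_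
      rw [Function.update_of_ne (Fin.succAbove_ne j i')]
  have hγ : ∀ j : Fin (n+2),
      ε (j:ℕ) * ρ (j.removeNth y) (auxT ρ (Fin.snoc x (y j)) (Fin.snoc a (c j)))
        = (∑ k : Fin (n+1), ε (j:ℕ) * (ε (k:ℕ) * P k j)) + ε (j:ℕ) * Q2 j := by
    intro j
    rw [auxT_snoc, Hadd, rho_sum Hadd, mul_add, Finset.mul_sum]
    congr 1
    refine Finset.sum_congr rfl fun k _ => ?_
    rw [rho_eps Hsmul]
  have hdouble : (∑ j : Fin (n+2), ∑ i' : Fin (n+1),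
        ε ((j.succAbove i' : Fin (n+2)):ℕ) *
          ρ ((j.succAbove i').removeNth (Function.update y j (b (Fin.snoc x (y j)))))
            (c (j.succAbove i')))
      = ∑ j : Fin (n+2), (ε (j:ℕ) * Q1 j - ε (j:ℕ) * Q2 j) := by
    rw [sum_succAbove_comm (fun i j => ε (i:ℕ) *
      ρ (i.removeNth (Function.update y j (b (Fin.snoc x (y j))))) (c i))]
    refine Finset.sum_congr rfl fun i _ => ?_
    have hin : ∀ p : Fin (n+1),
        ε (i:ℕ) * ρ (i.removeNth (Function.update y (i.succAbove p)
            (b (Fin.snoc x (y (i.succAbove p)))))) (c i)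
          = ε (i:ℕ) * ρ (Function.update (i.removeNth y) p
              (b (Fin.snoc x ((i.removeNth y) p)))) (c i) := by
      intro p
      rw [removeNth_update_succAbove]
      rfl
    rw [Finset.sum_congr rfl (fun p _ => hin p), ← Finset.mul_sum, ← Hcomm x (i.removeNth y) (c i),
      mul_sub]
  rw [Finset.sum_congr rfl (fun j _ => hRHSj j), Finset.sum_add_distrib,
    Finset.sum_congr rfl (fun j _ => hγ j), hdouble, Finset.sum_add_distrib,
    Finset.sum_sub_distrib]
  abel
end Fil

section Last
variable {R A L : Type*} [CommRing R] [CommRing A] [Algebra R A]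
  [AddCommGroup L] [Module R L] [Module A L] {n : ℕ}
variable {ρ : (Fin (n+1) → L) → A → A}
variable (Hder : ∀ (X : Fin (n+1) → L) (u v : A), ρ X (u * v) = u * ρ X v + v * ρ X u)
variable (Hanch : ∀ (X : Fin (n+1) → L) (i : Fin (n+1)) (a : A),
    ρ (Function.update X i (a • X i)) = a • ρ X)

include Hder Hanch in
lemma auxT_last (x : Fin (n+2) → L) (cc : Fin (n+2) → A) (a : A) :
    auxT ρ (Function.update x (Fin.last (n+1)) (a • x (Fin.last (n+1))))
        (Function.update cc (Fin.last (n+1)) (a * cc (Fin.last (n+1))))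
      = a * auxT ρ x cc + ρ (Fin.init x) a * cc (Fin.last (n+1)) := by
  rw [auxT_def, auxT_def]
  conv_lhs => rw [Fin.sum_univ_castSucc]
  conv_rhs => rw [Fin.sum_univ_castSucc]
  have hlastterm :
      ((-1:A)^(n + 1 + ((Fin.last (n+1) : Fin (n+2)):ℕ))) *
        ρ ((Fin.last (n+1)).removeNth
            (Function.update x (Fin.last (n+1)) (a • x (Fin.last (n+1)))))
          (Function.update cc (Fin.last (n+1)) (a * cc (Fin.last (n+1))) (Fin.last (n+1)))
        = a * ρ (Fin.init x) (cc (Fin.last (n+1)))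
          + cc (Fin.last (n+1)) * ρ (Fin.init x) a := by
    rw [eps_last', one_mul, Fin.removeNth_update, Fin.removeNth_last, Function.update_self, Hder]
  have hcastterm : ∀ k : Fin (n+1),
      ((-1:A)^(n + 1 + ((k.castSucc : Fin (n+2)):ℕ))) *
        ρ ((k.castSucc).removeNth
            (Function.update x (Fin.last (n+1)) (a • x (Fin.last (n+1)))))
          (Function.update cc (Fin.last (n+1)) (a * cc (Fin.last (n+1))) k.castSucc)
        = a * (((-1:A)^(n + 1 + ((k.castSucc : Fin (n+2)):ℕ))) *
            ρ ((k.castSucc).removeNth x) (cc k.castSucc)) := by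
    intro k
    have hne : (k.castSucc : Fin (n+2)) ≠ Fin.last (n+1) := (Fin.castSucc_lt_last k).ne
    have hXl : ((k.castSucc).removeNth x) (Fin.last n) = x (Fin.last (n+1)) :=
      congrArg x (sa_cast_last k)
    rw [Function.update_of_ne hne, ← sa_cast_last k, removeNth_update_succAbove, sa_cast_last k,
      ← hXl, Hanch]
    have : (a • ρ ((k.castSucc).removeNth x)) (cc k.castSucc)
        = a * ρ ((k.castSucc).removeNth x) (cc k.castSucc) := rfl
    rw [this]
    ring
  rw [hlastterm, Finset.sum_congr rfl (fun k _ => hcastterm k), eps_last', one_mul,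
    Fin.removeNth_last, mul_add, ← Finset.mul_sum]
  ring
end Last

lemma fst_comp_update {α β : Type*} {k : ℕ} (z : Fin k → α × β) (i : Fin k) (v : α × β) :
    (fun j => (Function.update z i v j).1) = Function.update (fun j => (z j).1) i v.1 := by
  funext j
  rcases eq_or_ne j i with rfl | hji
  · simp
  · simp [hji]

lemma snd_comp_update {α β : Type*} {k : ℕ} (z : Fin k → α × β) (i : Fin k) (v : α × β) :
    (fun j => (Function.update z i v j).2) = Function.update (fun j => (z j).2) i v.2 := by
  funext j
  rcases eq_or_ne j i with rfl | hji
  · simp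
  · simp [hji]

lemma fst_comp_snoc {α β : Type*} {k : ℕ} (z : Fin k → α × β) (v : α × β) :
    (fun j => ((Fin.snoc z v : Fin (k+1) → α × β) j).1) = Fin.snoc (fun j => (z j).1) v.1 := by
  funext j
  exact congrFun (Fin.comp_snoc Prod.fst z v) j

lemma snd_comp_snoc {α β : Type*} {k : ℕ} (z : Fin k → α × β) (v : α × β) :
    (fun j => ((Fin.snoc z v : Fin (k+1) → α × β) j).2) = Fin.snoc (fun j => (z j).2) v.2 := by
  funext j
  exact congrFun (Fin.comp_snoc Prod.snd z v) j

end NLRExt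

open NLRExt

/-- on `E = L ⊕ A` with
`[(x₁,a₁),…,(xₙ,aₙ)]' = ([x₁,…,xₙ], Σᵢ (-1)^{n-i} ρ(x₁,…,x̂ᵢ,…,xₙ)(aᵢ))` and
`ρ'((x₁,a₁),…) = ρ(x₁,…)`, with `A`-action `b(x,a) = (bx,ba)`, one gets an
(n+2)-Lie Rinehart algebra. -/
theorem trivial_extension_nLieRinehart (R A : Type*) [Field R] [CharZero R]
    [CommRing A] [Algebra R A]
    {L : Type*} [AddCommGroup L] [Module R L] [Module A L] [IsScalarTower R A L] {n : ℕ}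
    (b : (Fin (n+2) → L) → L) (ρ : (Fin (n+1) → L) → A → A)
    (h : IsNLieRinehart R A b ρ)
    (B : (Fin (n+2) → L × A) → L × A)
    (hB : B = fun z =>
      (b (fun i => (z i).1),
        ∑ i : Fin (n+2), ((-1 : A) ^ (n + 1 + (i : ℕ))) *
          ρ (i.removeNth (fun j => (z j).1)) ((z i).2)))
    (ρ' : (Fin (n+1) → L × A) → A → A)
    (hρ' : ρ' = fun z => ρ (fun j => (z j).1)) :
    IsNLieRinehart R A B ρ' := by
  classical
  obtain ⟨hbm, hba, hbf, hder, hrep, hanch, hlast⟩ := h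
  obtain ⟨hadd, hsmul, hmul, halt, hcomm, hcompat⟩ := hrep
  have hB1 : ∀ z : Fin (n+2) → L × A, (B z).1 = b (fun j => (z j).1) := by
    intro z; rw [hB]
  have hB2 : ∀ z : Fin (n+2) → L × A,
      (B z).2 = auxT ρ (fun j => (z j).1) (fun j => (z j).2) := by
    intro z; rw [hB]; rfl
  have hBz : ∀ z : Fin (n+2) → L × A,
      B z = (b (fun j => (z j).1), auxT ρ (fun j => (z j).1) (fun j => (z j).2)) := by
    intro z
    rw [← hB1 z, ← hB2 z]
  have hρ'z : ∀ z : Fin (n+1) → L × A, ρ' z = ρ (fun j => (z j).1) := by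
    intro z; rw [hρ']
  refine ⟨⟨?_, ?_⟩, ?_, ?_, ?_, ⟨?_, ?_, ⟨?_, ?_⟩, ?_, ?_, ?_⟩, ?_, ?_⟩
  · -- B additive in each slot
    intro z i u v
    simp only [hBz, fst_comp_update, snd_comp_update, Prod.fst_add, Prod.snd_add,
      Prod.mk_add_mk, Prod.mk.injEq]
    exact ⟨hbm.1 _ i u.1 v.1, auxT_add hadd hmul _ _ i u.1 v.1 u.2 v.2⟩
  · -- B R-homogeneous in each slot
    intro z i c u
    simp only [hBz, fst_comp_update, snd_comp_update, Prod.smul_fst, Prod.smul_snd,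
      Prod.smul_mk, Prod.mk.injEq]
    exact ⟨hbm.2 _ i c u.1, auxT_smul hsmul hmul _ _ i c u.1 u.2⟩
  · -- B alternating
    intro z i j hij hz
    have hx : (z i).1 = (z j).1 := congrArg Prod.fst hz
    have ha : (z i).2 = (z j).2 := congrArg Prod.snd hz
    rw [hBz, show (0 : L × A) = ((0 : L), (0 : A)) from rfl, Prod.mk.injEq]
    exact ⟨hba _ i j hij hx, auxT_alt hmul halt _ _ i j hij hx ha⟩
  · -- Filippov identity for B
    intro z w
    have hupd : ∀ i : Fin (n+2), B (Function.update w i (B (Fin.snoc z (w i))))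
        = (b (Function.update (fun j => (w j).1) i
              (b (Fin.snoc (fun j => (z j).1) ((w i).1)))),
           auxT ρ (Function.update (fun j => (w j).1) i
              (b (Fin.snoc (fun j => (z j).1) ((w i).1))))
             (Function.update (fun j => (w j).2) i
               (auxT ρ (Fin.snoc (fun j => (z j).1) ((w i).1))
                 (Fin.snoc (fun j => (z j).2) ((w i).2))))) := by
      intro i
      rw [hBz, fst_comp_update, snd_comp_update, hB1, hB2, fst_comp_snoc, snd_comp_snoc]
    have hsnocB : B (Fin.snoc z (B w))
        = (b (Fin.snoc (fun j => (z j).1) (b (fun j => (w j).1))),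
           auxT ρ (Fin.snoc (fun j => (z j).1) (b (fun j => (w j).1)))
             (Fin.snoc (fun j => (z j).2)
               (auxT ρ (fun j => (w j).1) (fun j => (w j).2)))) := by
      rw [hBz, fst_comp_snoc, snd_comp_snoc, hB1, hB2]
    rw [hsnocB, Finset.sum_congr rfl (fun i _ => hupd i)]
    refine Prod.ext ?_ ?_
    · rw [Prod.fst_sum]
      exact hbf (fun j => (z j).1) (fun j => (w j).1)
    · rw [Prod.snd_sum]
      exact auxT_filippov hadd hsmul hcomm hcompat
        (fun j => (z j).1) (fun j => (z j).2) (fun j => (w j).1) (fun j => (w j).2)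
  · -- ρ' is a derivation
    intro z a a'
    rw [hρ'z]
    exact hder _ a a'
  · -- ρ' additive on A
    intro z m m'
    rw [hρ'z]
    exact hadd _ m m'
  · -- ρ' R-homogeneous on A
    intro z c m
    rw [hρ'z]
    exact hsmul _ c m
  · -- ρ' multilinear: additivity
    intro z i u v
    simp only [hρ'z, fst_comp_update, Prod.fst_add]
    exact hmul.1 _ i u.1 v.1
  · -- ρ' multilinear: homogeneity
    intro z i c u
    simp only [hρ'z, fst_comp_update, Prod.smul_fst]
    exact hmul.2 _ i c u.1
  · -- ρ' alternating
    intro z i j hij hz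
    rw [hρ'z]
    exact halt _ i j hij (congrArg Prod.fst hz)
  · -- commutator condition
    intro z w m
    simp only [hρ'z, fst_comp_update, hB1, fst_comp_snoc]
    exact hcomm (fun j => (z j).1) (fun j => (w j).1) m
  · -- compatibility condition
    intro z w m
    have hsnocB : ρ' (Fin.snoc z (B w))
        = ρ (Fin.snoc (fun j => (z j).1) (b (fun j => (w j).1))) := by
      rw [hρ'z, fst_comp_snoc, hB1]
    have hrm : ∀ i : Fin (n+2), ρ' (i.removeNth w) = ρ (i.removeNth (fun j => (w j).1)) := by
      intro i
      rw [hρ'z]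
      rfl
    have hsn : ∀ i : Fin (n+2), ρ' (Fin.snoc z (w i))
        = ρ (Fin.snoc (fun j => (z j).1) ((w i).1)) := by
      intro i
      rw [hρ'z, fst_comp_snoc]
    simp only [hsnocB, hrm, hsn]
    exact hcompat (fun j => (z j).1) (fun j => (w j).1) m
  · -- anchor A-linearity
    intro z i a
    simp only [hρ'z, fst_comp_update, Prod.smul_fst]
    exact hanch _ i a
  · -- Leibniz rule in the last slot
    intro z a
    rw [hBz, hBz, hρ'z, fst_comp_update, snd_comp_update]
    refine Prod.ext ?_ ?_
    · simp only [Prod.fst_add, Prod.smul_fst]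
      exact hlast (fun j => (z j).1) a
    · simp only [Prod.snd_add, Prod.smul_snd, smul_eq_mul]
      exact auxT_last hder hanch (fun j => (z j).1) (fun j => (z j).2) a

end
end

section
/- In an n-Lie Rinehart algebra (L, A, [·,…,·], ρ), the kernel K = {x ∈ L : ρ(x, y_1,…,y_{n-2}) = 0 for all y_i ∈ L} is an ideal of the n-Lie Rinehart algebra: it is an ideal of the n-Lie algebra, AK ⊆ K, and ρ(K,L,…,L)(A)·L ⊆ K. -/
open Function BigOperators

/-!
The anchor `ρ` is alternating, so a tuple with a kernel element `x` in any slot is killed by it.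
With `y = (x, z)`, the representation identity writes `ρ(v, [y])(a)` as a sum of terms
`± ρ(y without yᵢ)(ρ(v, yᵢ) a)`: for `i = 0` the inner anchor contains `x`, for `i ≠ 0` the outer
one does. The other two closure properties come from `A`-linearity of `ρ` in each slot and from
`ρ(0, …) = 0`.
-/

def IsMultilin.toAlternatingMap {R : Type*} [CommRing R] {L N : Type*} [AddCommGroup L]
    [Module R L] [AddCommGroup N] [Module R N] {m : ℕ} {f : (Fin m → L) → N}
    (hml : IsMultilin R f) (halt : IsAlt f) : L [⋀^Fin m]→ₗ[R] N where
  toFun := f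
  map_update_add' x i u v := by convert hml.1 x i u v
  map_update_smul' x i c u := by convert hml.2 x i c u
  map_eq_zero_of_eq' x i j hx hij := halt x i j hij hx

theorem AlternatingMap.map_eq_zero_of_forall_apply_eq {R M N ι : Type*} [CommRing R]
    [AddCommGroup M] [Module R M] [AddCommGroup N] [Module R N] [DecidableEq ι]
    (g : M [⋀^ι]→ₗ[R] N) {i j : ι} {x : M} (h : ∀ v, v i = x → g v = 0)
    {v : ι → M} (hv : v j = x) : g v = 0 := by
  obtain rfl | hij := eq_or_ne i j
  · exact h v hv
  · rw [← neg_eq_zero, ← g.map_swap v hij]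
    exact h _ (by simpa using hv)

def anchorKer {A L : Type*} [Zero A] {n : ℕ} (ρ : (Fin (n+1) → L) → A → A) : Set L :=
  {x | ∀ (y : Fin n → L) (a : A), ρ (Fin.cons x y) a = 0}

theorem mem_anchorKer_iff {A L : Type*} [Zero A] {n : ℕ} {ρ : (Fin (n+1) → L) → A → A}
    {x : L} : x ∈ anchorKer ρ ↔ ∀ w : Fin (n+1) → L, w 0 = x → ρ w = 0 := by
  refine ⟨fun hx w hw => ?_, fun hx y a => by rw [hx _ rfl, Pi.zero_apply]⟩
  rw [← Fin.cons_self_tail w, hw]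
  exact funext (hx _)

section Anchor

variable {R A : Type*} [CommRing R] [CommRing A] [Module R A]
  {L : Type*} [AddCommGroup L] [Module R L] {n : ℕ} {ρ : (Fin (n+1) → L) → A → A}

theorem anchor_eq_zero_of_apply_eq_mem_anchorKer (hml : IsMultilin R ρ) (halt : IsAlt ρ)
    {x : L} (hx : x ∈ anchorKer ρ) {w : Fin (n+1) → L} {j : Fin (n+1)} (hw : w j = x) :
    ρ w = 0 :=
  (hml.toAlternatingMap halt).map_eq_zero_of_forall_apply_eq (mem_anchorKer_iff.1 hx) hw

theorem zero_mem_anchorKer (hml : IsMultilin R ρ) (halt : IsAlt ρ) : (0 : L) ∈ anchorKer ρ :=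
  fun y => congrFun ((hml.toAlternatingMap halt).map_coord_zero (m := Fin.cons 0 y) 0 rfl)

theorem anchor_smul_mem_anchorKer [Module A L] (hml : IsMultilin R ρ) (halt : IsAlt ρ) {x : L}
    (hx : x ∈ anchorKer ρ) (y : Fin n → L) (a : A) (u : L) :
    ρ (Fin.cons x y) a • u ∈ anchorKer ρ := by
  rw [hx y a, zero_smul]
  exact zero_mem_anchorKer hml halt

theorem anchor_snoc_bracket_eq_zero {b : (Fin (n+2) → L) → L} (hrep : IsRep R b ρ) {x : L}
    (hx : x ∈ anchorKer ρ) (z : Fin (n+1) → L) (v : Fin n → L) :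
    ρ (Fin.snoc v (b (Fin.cons x z))) = 0 := by
  obtain ⟨hadd, -, hml, halt, -, hbr⟩ := hrep
  have hρ0 (w : Fin (n+1) → L) : ρ w 0 = 0 := map_zero (AddMonoidHom.mk' (ρ w) (hadd w))
  funext a
  rw [hbr, Pi.zero_apply]
  refine Finset.sum_eq_zero fun i _ => ?_
  obtain rfl | hi := eq_or_ne i 0
  · have hx0 : ρ (Fin.snoc v ((Fin.cons x z : Fin (n+2) → L) 0)) = 0 :=
      anchor_eq_zero_of_apply_eq_mem_anchorKer hml halt hx (j := Fin.last n) (by simp)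
    rw [hx0, Pi.zero_apply, hρ0, smul_zero]
  · have hxi : i.removeNth (Fin.cons x z : Fin (n+2) → L) 0 = x := by
      simp [Fin.removeNth, Fin.succAbove_ne_zero_zero hi]
    rw [anchor_eq_zero_of_apply_eq_mem_anchorKer hml halt hx hxi, Pi.zero_apply, smul_zero]

theorem bracket_mem_anchorKer {b : (Fin (n+2) → L) → L} (hrep : IsRep R b ρ) {x : L}
    (hx : x ∈ anchorKer ρ) (z : Fin (n+1) → L) : b (Fin.cons x z) ∈ anchorKer ρ := by
  refine mem_anchorKer_iff.2 fun w hw =>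
    (hrep.2.2.1.toAlternatingMap hrep.2.2.2.1).map_eq_zero_of_forall_apply_eq
      (i := Fin.last n) (fun w' hw' => ?_) hw
  rw [← Fin.snoc_init_self w', hw']
  exact anchor_snoc_bracket_eq_zero hrep hx z _

end Anchor

theorem smul_mem_anchorKer {A L : Type*} [CommRing A] [AddCommGroup L] [Module A L] {n : ℕ}
    {ρ : (Fin (n+1) → L) → A → A}
    (hρa : ∀ (w : Fin (n+1) → L) (i : Fin (n+1)) (a : A),
      ρ (Function.update w i (a • w i)) = a • ρ w)
    {x : L} (hx : x ∈ anchorKer ρ) (a : A) : a • x ∈ anchorKer ρ := by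
  intro y a'
  have hlin := hρa (Fin.cons x y) 0 a
  rw [Fin.cons_zero, Fin.update_cons_zero] at hlin
  rw [hlin, Pi.smul_apply, hx y a', smul_zero]

theorem kernel_is_ideal_general (R A : Type*) [Field R]
    [CommRing A] [Algebra R A]
    {L : Type*} [AddCommGroup L] [Module R L] [Module A L] [IsScalarTower R A L] {n : ℕ}
    (b : (Fin (n+2) → L) → L) (ρ : (Fin (n+1) → L) → A → A)
    (h : IsNLieRinehart R A b ρ)
    (Ker : Set L) (hKer : Ker = {x : L | ∀ (y : Fin n → L) (a : A), ρ (Fin.cons x y) a = 0}) :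
    -- n-Lie algebra ideal: [K, L, …, L] ⊆ K
    (∀ x ∈ Ker, ∀ (z : Fin (n+1) → L), b (Fin.cons x z) ∈ Ker) ∧
    -- A·K ⊆ K
    (∀ x ∈ Ker, ∀ (a : A), a • x ∈ Ker) ∧
    -- ρ(K, L, …, L)(A)·L ⊆ K
    (∀ x ∈ Ker, ∀ (y : Fin n → L) (a : A) (u : L), (ρ (Fin.cons x y) a) • u ∈ Ker) := by
  obtain ⟨-, -, -, -, hrep, hρa, -⟩ := h
  change Ker = anchorKer ρ at hKer
  subst hKer
  exact ⟨fun x hx => bracket_mem_anchorKer hrep hx, fun x hx => smul_mem_anchorKer hρa hx,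
    fun x hx => anchor_smul_mem_anchorKer hrep.2.2.1 hrep.2.2.2.1 hx⟩

/-- the kernel `K = {x | ρ(x,y₁,…) = 0 ∀ yᵢ}` of the anchor of an
(n+2)-Lie Rinehart algebra is an ideal: it is an `n`-Lie algebra ideal, `AK ⊆ K`,
and `ρ(K,L,…,L)(A)·L ⊆ K`. -/
theorem kernel_is_ideal (R A : Type*) [Field R] [CharZero R]
    [CommRing A] [Algebra R A]
    {L : Type*} [AddCommGroup L] [Module R L] [Module A L] [IsScalarTower R A L] {n : ℕ}
    (b : (Fin (n+2) → L) → L) (ρ : (Fin (n+1) → L) → A → A)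
    (h : IsNLieRinehart R A b ρ)
    (Ker : Set L) (hKer : Ker = {x : L | ∀ (y : Fin n → L) (a : A), ρ (Fin.cons x y) a = 0}) :
    -- n-Lie algebra ideal: [K, L, …, L] ⊆ K
    (∀ x ∈ Ker, ∀ (z : Fin (n+1) → L), b (Fin.cons x z) ∈ Ker) ∧
    -- A·K ⊆ K
    (∀ x ∈ Ker, ∀ (a : A), a • x ∈ Ker) ∧
    -- ρ(K, L, …, L)(A)·L ⊆ K
    (∀ x ∈ Ker, ∀ (y : Fin n → L) (a : A) (u : L), (ρ (Fin.cons x y) a) • u ∈ Ker) :=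
  kernel_is_ideal_general R A b ρ h Ker hKer
end

section
/- Let (L,A,[·,…,·],ρ) be an n-Lie Rinehart algebra, (M,ψ) a representation, θ: ∧^n L → M a 2-cocycle, and f: L → M a 1-cochain (an A-linear map). Define θ_f(x_1,…,x_n) = f([x_1,…,x_n]) − Σ_{i=1}^n (-1)^{n-i} ψ(x_1,…,x̂_i,…,x_n)f(x_i). Then the map Φ: T_θ(L) → T_{θ+θ_f}(L), Φ(x+m) = x + f(x) + m, together with the identity of A, is an isomorphism of n-Lie Rinehart algebras. -/
open Function BigOperators

/-- `Φ(x+m) = x + f(x) + m` together with `Id_A` is an isomorphism of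
(n+2)-Lie Rinehart algebras `T_θ(L) → T_{θ+θ_f}(L)`. -/
theorem Ttheta_shift_isomorphism (R A : Type*) [Field R] [CharZero R]
    [CommRing A] [Algebra R A]
    {L M : Type*} [AddCommGroup L] [Module R L] [Module A L] [IsScalarTower R A L]
    [AddCommGroup M] [Module R M] [Module A M] [IsScalarTower R A M] {n : ℕ}
    (b : (Fin (n+2) → L) → L) (ρ : (Fin (n+1) → L) → A → A)
    (h : IsNLieRinehart R A b ρ)
    (ψ : (Fin (n+1) → L) → M → M) (hψ : IsRinehartRep R A b ρ ψ)
    -- θ is a 2-cochain which is a 2-cocycle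
    (θ : (Fin (n+2) → L) → M) (hθmul : IsMultilin R θ) (hθalt : IsAlt θ)
    (hθA : ∀ (x : Fin (n+2) → L) (i : Fin (n+2)) (a : A),
      θ (Function.update x i (a • x i)) = a • θ x)
    (hθcocycle : ∀ (y : Fin (n+1) → L) (x : Fin (n+2) → L),
      θ (Fin.snoc y (b x))
        = (∑ i : Fin (n+2), θ (Function.update x i (b (Fin.snoc y (x i)))))
          + (∑ i : Fin (n+2), ((-1 : R) ^ (n + 1 + (i : ℕ))) •
              ψ (i.removeNth x) (θ (Fin.snoc y (x i))))
          - ψ y (θ x))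
    -- f is a 1-cochain (A-linear map L → M)
    (f : L → M) (hfadd : ∀ x y : L, f (x + y) = f x + f y)
    (hfR : ∀ (c : R) (x : L), f (c • x) = c • f x)
    (hfA : ∀ (a : A) (x : L), f (a • x) = a • f x)
    (θf : (Fin (n+2) → L) → M)
    (hθf : θf = fun x => f (b x) -
      ∑ i : Fin (n+2), ((-1 : R) ^ (n + 1 + (i : ℕ))) • ψ (i.removeNth x) (f (x i)))
    -- the brackets of T_θ(L) and T_{θ+θ_f}(L)
    (Bθ Bθ' : (Fin (n+2) → L × M) → L × M)
    (hBθ : Bθ = fun z =>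
      (b (fun i => (z i).1),
        θ (fun i => (z i).1) +
        ∑ i : Fin (n+2), ((-1 : R) ^ (n + 1 + (i : ℕ))) •
          ψ (i.removeNth (fun j => (z j).1)) ((z i).2)))
    (hBθ' : Bθ' = fun z =>
      (b (fun i => (z i).1),
        (θ (fun i => (z i).1) + θf (fun i => (z i).1)) +
        ∑ i : Fin (n+2), ((-1 : R) ^ (n + 1 + (i : ℕ))) •
          ψ (i.removeNth (fun j => (z j).1)) ((z i).2)))
    (Φ : L × M → L × M) (hΦ : Φ = fun p => (p.1, f p.1 + p.2)) :
    -- Φ is bijective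
    Function.Bijective Φ ∧
    -- Φ preserves the brackets
    (∀ z : Fin (n+2) → L × M, Φ (Bθ z) = Bθ' (fun i => Φ (z i))) ∧
    -- Φ is A-linear (compatible with g = Id_A)
    (∀ (a : A) (p : L × M), Φ (a • p) = a • Φ p) ∧
    (∀ (p q : L × M), Φ (p + q) = Φ p + Φ q) ∧
    -- compatibility of the anchors (both equal ρ of the first components)
    (∀ (z : Fin (n+1) → L × M) (a : A),
      ρ (fun i => (z i).1) a = ρ (fun i => (Φ (z i)).1) a) := by

  obtain ⟨hψadd, -⟩ := hψ.1
  subst hΦ hBθ hBθ' hθf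
  refine ⟨⟨?_, ?_⟩, ?_, ?_, ?_, ?_⟩
  · intro p q hpq
    simp only [Prod.mk.injEq] at hpq
    obtain ⟨h1, h2⟩ := hpq
    rw [h1] at h2
    exact Prod.ext h1 (by exact add_left_cancel h2)
  · intro p
    exact ⟨(p.1, p.2 - f p.1), by simp⟩
  · intro z
    simp only [Prod.mk.injEq]
    refine ⟨trivial, ?_⟩
    have : ∀ i : Fin (n+2),
        ((-1 : R) ^ (n + 1 + (i : ℕ))) •
          ψ (i.removeNth (fun j => (z j).1)) (f ((z i).1) + (z i).2)
        = ((-1 : R) ^ (n + 1 + (i : ℕ))) •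
            ψ (i.removeNth (fun j => (z j).1)) (f ((z i).1))
          + ((-1 : R) ^ (n + 1 + (i : ℕ))) •
            ψ (i.removeNth (fun j => (z j).1)) ((z i).2) := by
      intro i; rw [hψadd, smul_add]
    rw [Finset.sum_congr rfl (fun i _ => this i), Finset.sum_add_distrib]
    abel
  · intro a p
    simp [Prod.smul_mk, hfA, smul_add, Prod.ext_iff]
  · intro p q
    simp [hfadd, Prod.ext_iff]; abel
  · intro z a
    rfl
end
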